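/- For every integer n ≥ 3 there exist an inner product α on the real Lie algebra su(n) of traceless skew-Hermitian n×n complex matrices, a nonzero vector V ∈ su(n) satisfying |⟨Y,V⟩_bi| < √(α(Y,Y)) for all nonzero Y ∈ su(n) (where ⟨A,B⟩_bi = Re tr(Aᴴ B)), a nonzero vector X ∈ su(n), and a real number l > 0 such that √(α(Y,Y)) + ⟨Y,V⟩_bi = l for all Y in the adjoint orbit {uXu⁻¹ : u ∈ SU(n)}. -/

import Mathlib

open Matrix

attribute [local instance 100] LieRing.ofAssociativeRing

/-- The real Lie algebra `su(n)` of traceless skew-Hermitian `n × n` complex matrices,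
as a Lie subalgebra of the Lie algebra of all `n × n` complex matrices (with commutator
bracket). -/
def su (n : ℕ) : LieSubalgebra ℝ (Matrix (Fin n) (Fin n) ℂ) where
  carrier := {A | Aᴴ = -A ∧ A.trace = 0}
  add_mem' := by
    rintro A B ⟨hA1, hA2⟩ ⟨hB1, hB2⟩
    constructor
    · simp [conjTranspose_add, hA1, hB1]; abel
    · simp [trace_add, hA2, hB2]
  zero_mem' := by simp
  smul_mem' := by
    rintro c A ⟨hA1, hA2⟩
    constructor
    · simp [conjTranspose_smul, hA1]
    · simp [trace_smul, hA2]
  lie_mem' := by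
    rintro A B ⟨hA1, hA2⟩ ⟨hB1, hB2⟩
    constructor
    · simp only [Ring.lie_def, conjTranspose_sub, conjTranspose_mul, hA1, hB1]
      simp only [mul_neg, neg_mul, neg_sub, neg_neg]
    · simp [Ring.lie_def, trace_sub, trace_mul_comm A B]

/-- The bi-invariant inner product `⟨A, B⟩_bi = Re tr(Aᴴ B)`. -/
noncomputable def binner {n : ℕ} (A B : Matrix (Fin n) (Fin n) ℂ) : ℝ :=
  ((Aᴴ * B).trace).re

theorem conj_mem_su {n : ℕ} (u : specialUnitaryGroup (Fin n) ℂ) {A : Matrix (Fin n) (Fin n) ℂ}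
    (hA : A ∈ su n) : (u : Matrix (Fin n) (Fin n) ℂ) * A * (u : Matrix (Fin n) (Fin n) ℂ)ᴴ ∈ su n := by
  obtain ⟨hA1, hA2⟩ := hA
  have hu : (u : Matrix (Fin n) (Fin n) ℂ)ᴴ * (u : Matrix (Fin n) (Fin n) ℂ) = 1 := by
    have hmem : (u : Matrix (Fin n) (Fin n) ℂ) ∈ unitaryGroup (Fin n) ℂ :=
      (Submonoid.mem_inf.mp u.2).1
    rw [Matrix.mem_unitaryGroup_iff'] at hmem
    simpa [Matrix.star_eq_conjTranspose] using hmem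
  constructor
  · simp only [conjTranspose_mul, conjTranspose_conjTranspose, hA1]
    simp [Matrix.mul_assoc]
  · calc ((u : Matrix (Fin n) (Fin n) ℂ) * A * (u : Matrix (Fin n) (Fin n) ℂ)ᴴ).trace
        = ((u : Matrix (Fin n) (Fin n) ℂ)ᴴ * ((u : Matrix (Fin n) (Fin n) ℂ) * A)).trace := by
          rw [trace_mul_comm]
      _ = A.trace := by rw [← Matrix.mul_assoc, hu, Matrix.one_mul]
      _ = 0 := hA2

/-- The adjoint action of `SU(n)` on `su(n)`: `Ad u X = u X u⁻¹ = u X uᴴ`. -/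
noncomputable def Ad {n : ℕ} (u : specialUnitaryGroup (Fin n) ℂ) (X : su n) : su n :=
  ⟨(u : Matrix (Fin n) (Fin n) ℂ) * (X : Matrix (Fin n) (Fin n) ℂ) *
    (u : Matrix (Fin n) (Fin n) ℂ)ᴴ, conj_mem_su u X.2⟩

/-!
Take `X = i (1 - n E)` for a rank-one Hermitian projection `E`. Its eigenvalues are `i` and
`i (1 - n)`, so every `Y` in its adjoint orbit satisfies `Y² = i (2 - n) Y + (1 - n)`. For such `Y`
the norm `⟨Y, Y⟩_bi = n (n - 1)` is constant and, because `2 - n ≠ 0`, the linear function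
`⟨Y, X⟩_bi` is an affine function of the quadratic form `⟨Y, Y (1 - E)⟩_bi`. Hence, with `V = ε X`,
the function `(l - ⟨Y, V⟩_bi)²` agrees on the orbit with the quadratic form
`α(Y, Y) = a ⟨Y, Y⟩_bi + b ⟨Y, Y (1 - E)⟩_bi + ⟨Y, V⟩_bi²`, and for small `ε` both `a` and `b` are
positive. As `1 - E ≥ 0`, `α` is then an inner product with `α(Y, Y) > ⟨Y, V⟩_bi²` for `Y ≠ 0`.
-/

theorem sqrt_add_eq_of_eq_sq_sub {A β l : ℝ} (hl : 0 < l) (hA : A = (l - β) ^ 2)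
    (hβ : β ^ 2 ≤ A) : √A + β = l := by
  have : 0 ≤ l - β := by nlinarith
  rw [hA, Real.sqrt_sq this, sub_add_cancel]

section

open scoped ComplexOrder

variable {n : ℕ}

section Binner

theorem binner_comm (A B : Matrix (Fin n) (Fin n) ℂ) : binner A B = binner B A := by
  calc (Aᴴ * B).trace.re = (star (Aᴴ * B).trace).re := (Complex.conj_re _).symm
    _ = (Bᴴ * A).trace.re := by
      rw [← trace_conjTranspose, conjTranspose_mul, conjTranspose_conjTranspose]

theorem binner_mul_right (A B D : Matrix (Fin n) (Fin n) ℂ) :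
    binner A (B * D) = binner (A * Dᴴ) B := by
  rw [binner, binner, conjTranspose_mul, conjTranspose_conjTranspose, ← Matrix.mul_assoc,
    trace_mul_comm, Matrix.mul_assoc]

theorem binner_self_pos {A : Matrix (Fin n) (Fin n) ℂ} (hA : A ≠ 0) : 0 < binner A A :=
  (Complex.pos_iff.1 <| (posSemidef_conjTranspose_mul_self A).trace_nonneg.lt_of_ne' <|
    trace_conjTranspose_mul_self_eq_zero_iff.not.2 hA).1

theorem binner_self_nonneg (A : Matrix (Fin n) (Fin n) ℂ) : 0 ≤ binner A A :=
  (Complex.nonneg_iff.1 (posSemidef_conjTranspose_mul_self A).trace_nonneg).1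

theorem binner_mul_posSemidef_nonneg (A : Matrix (Fin n) (Fin n) ℂ)
    {D : Matrix (Fin n) (Fin n) ℂ} (hD : D.PosSemidef) : 0 ≤ binner A (A * D) := by
  rw [binner, trace_mul_comm]
  exact (Complex.nonneg_iff.1 (hD.mul_mul_conjTranspose_same A).trace_nonneg).1

theorem binner_eq_neg_re_trace_mul {A : Matrix (Fin n) (Fin n) ℂ} (hA : Aᴴ = -A)
    (B : Matrix (Fin n) (Fin n) ℂ) : binner A B = -(A * B).trace.re := by
  rw [binner, hA, Matrix.neg_mul, trace_neg, Complex.neg_re]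

noncomputable def binnerₗ : Matrix (Fin n) (Fin n) ℂ →ₗ[ℝ] Matrix (Fin n) (Fin n) ℂ →ₗ[ℝ] ℝ :=
  LinearMap.mk₂ ℝ binner
    (fun A B C => by simp [binner, conjTranspose_add, Matrix.add_mul, trace_add])
    (fun r A B => by simp [binner, conjTranspose_smul, trace_smul])
    (fun A B C => by simp [binner, Matrix.mul_add, trace_add])
    (fun r A B => by simp [binner, trace_smul])

@[simp] theorem binnerₗ_apply (A B : Matrix (Fin n) (Fin n) ℂ) : binnerₗ A B = binner A B := rfl

theorem binner_smul_right (A B : Matrix (Fin n) (Fin n) ℂ) (r : ℝ) :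
    binner A (r • B) = r * binner A B :=
  (binnerₗ A).map_smul r B

end Binner

section RandersForm

variable (a b : ℝ) (D V : Matrix (Fin n) (Fin n) ℂ)

noncomputable def randersForm : Matrix (Fin n) (Fin n) ℂ →ₗ[ℝ] Matrix (Fin n) (Fin n) ℂ →ₗ[ℝ] ℝ :=
  a • binnerₗ + b • binnerₗ.compl₂ (LinearMap.mulRight ℝ D) +
    (LinearMap.mul ℝ ℝ).compl₁₂ (binnerₗ.flip V) (binnerₗ.flip V)

theorem randersForm_apply (Y Z : Matrix (Fin n) (Fin n) ℂ) :
    randersForm a b D V Y Z =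
      a * binner Y Z + b * binner Y (Z * D) + binner Y V * binner Z V := by
  simp [randersForm]

variable {a b D V}

theorem randersForm_comm (hD : D.IsHermitian) (Y Z : Matrix (Fin n) (Fin n) ℂ) :
    randersForm a b D V Y Z = randersForm a b D V Z Y := by
  rw [randersForm_apply, randersForm_apply, binner_mul_right Y, hD.eq, binner_comm (Y * D),
    binner_comm Y Z]
  ring

theorem le_randersForm_self (hb : 0 ≤ b) (hD : D.PosSemidef) (Y : Matrix (Fin n) (Fin n) ℂ) :
    a * binner Y Y + binner Y V ^ 2 ≤ randersForm a b D V Y Y := by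
  rw [randersForm_apply]
  nlinarith [mul_nonneg hb (binner_mul_posSemidef_nonneg Y hD)]

end RandersForm

theorem Ad_mul_self {u : specialUnitaryGroup (Fin n) ℂ} {X : su n} {a b : ℂ}
    (hX : X.1 * X.1 = a • X.1 + b • 1) : (Ad u X).1 * (Ad u X).1 = a • (Ad u X).1 + b • 1 := by
  let φ := Unitary.conjStarAlgAut ℂ (Matrix (Fin n) (Fin n) ℂ) ⟨u, u.2.1⟩
  change φ X.1 * φ X.1 = a • φ X.1 + b • 1
  rw [← map_mul, hX, map_add, map_smul, map_smul, map_one]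

theorem binner_self_of_mul_self {Y : Matrix (Fin n) (Fin n) ℂ} (hY : Y ∈ su n) {a b : ℂ}
    (h : Y * Y = a • Y + b • 1) : binner Y Y = -(b * n).re := by
  rw [binner_eq_neg_re_trace_mul hY.1, h, trace_add, trace_smul, trace_smul, hY.2, trace_one]
  simp

section SkewOfProj

variable {E : Matrix (Fin n) (Fin n) ℂ}

theorem posSemidef_one_sub (hE : Eᴴ = E) (hE2 : E * E = E) : (1 - E).PosSemidef := by
  have : (1 - E)ᴴ * (1 - E) = 1 - E := by
    rw [conjTranspose_sub, hE, conjTranspose_one, Matrix.sub_mul, Matrix.one_mul,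
      Matrix.mul_sub, Matrix.mul_one, hE2, sub_self, sub_zero]
  exact this ▸ posSemidef_conjTranspose_mul_self (1 - E)

noncomputable def skewOfProj (E : Matrix (Fin n) (Fin n) ℂ) : Matrix (Fin n) (Fin n) ℂ :=
  Complex.I • (1 - (n : ℂ) • E)

theorem skewOfProj_mem_su (hE : Eᴴ = E) (htr : E.trace = 1) : skewOfProj E ∈ su n := by
  constructor
  · simp [skewOfProj, conjTranspose_smul, conjTranspose_sub, hE]
  · simp [skewOfProj, trace_sub, trace_smul, htr]

theorem skewOfProj_mul_self (hE : E * E = E) :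
    skewOfProj E * skewOfProj E =
      (Complex.I * (2 - n)) • skewOfProj E + (1 - n : ℂ) • 1 := by
  simp only [skewOfProj, Matrix.smul_mul, Matrix.mul_smul, sub_mul, mul_sub, Matrix.one_mul,
    Matrix.mul_one, smul_sub, smul_smul, hE]
  match_scalars
  · linear_combination ((n : ℂ) - 1) * Complex.I_mul_I
  · ring

theorem skewOfProj_ne_zero (hE : E * E = E) (htr : E.trace = 1) (hn : n ≠ 1) :
    skewOfProj E ≠ 0 := by
  intro h
  have : (E * skewOfProj E).trace = Complex.I * (1 - n) := by
    simp [skewOfProj, Matrix.mul_sub, hE, trace_sub, trace_smul, htr]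
  rw [h, Matrix.mul_zero, trace_zero, eq_comm, mul_eq_zero, sub_eq_zero] at this
  exact hn (by exact_mod_cast (this.resolve_left Complex.I_ne_zero).symm)

theorem binner_skewOfProj_of_mul_self {Y : Matrix (Fin n) (Fin n) ℂ} (hY : Y ∈ su n)
    (htr : E.trace = 1)
    (h : Y * Y = (Complex.I * (2 - n)) • Y + (1 - n : ℂ) • 1) :
    n * binner Y (Y * (1 - E)) + (n - 2) * binner Y (skewOfProj E) = n * (n - 1) ^ 2 := by
  set z := -(Complex.I * (Y * E).trace)
  have hYY : (Y * (Y * (1 - E))).trace = ((2 - n : ℝ) : ℂ) * z - ((n - 1) ^ 2 : ℝ) := by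
    rw [← Matrix.mul_assoc, h]
    simp only [Matrix.mul_sub, Matrix.add_mul, Matrix.smul_mul, Matrix.one_mul, Matrix.mul_one,
      trace_sub, trace_add, trace_smul, trace_one, hY.2, htr, Fintype.card_fin, smul_eq_mul, z]
    push_cast
    ring
  have hYX : (Y * skewOfProj E).trace = ((n : ℝ) : ℂ) * z := by
    simp only [skewOfProj, Matrix.mul_smul, Matrix.mul_sub, Matrix.mul_one, trace_smul,
      trace_sub, hY.2, z, smul_eq_mul]
    push_cast
    ring
  rw [binner_eq_neg_re_trace_mul hY.1, binner_eq_neg_re_trace_mul hY.1, hYY, hYX]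
  simp only [Complex.sub_re, Complex.re_ofReal_mul, Complex.ofReal_re]
  ring

end SkewOfProj

theorem randersForm_self_eq_sq {E Y : Matrix (Fin n) (Fin n) ℂ} (hY : Y ∈ su n)
    (htr : E.trace = 1) (h : Y * Y = (Complex.I * (2 - n)) • Y + (1 - n : ℂ) • 1)
    {a b ε l : ℝ} (hb : b * (n - 2) = 2 * l * n * ε)
    (ha : a * n * (n - 1) + b * (n - 1) ^ 2 = l ^ 2) :
    randersForm a b (1 - E) (ε • skewOfProj E) Y Y = (l - binner Y (ε • skewOfProj E)) ^ 2 := by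
  have hn : (n : ℝ) ≠ 0 := by
    rintro hn
    obtain rfl : n = 0 := by exact_mod_cast hn
    simp [Matrix.trace] at htr
  have key := binner_skewOfProj_of_mul_self hY htr h
  rw [randersForm_apply, binner_self_of_mul_self hY h, binner_smul_right]
  apply mul_left_cancel₀ hn
  simp only [Complex.mul_re, Complex.sub_re, Complex.one_re, Complex.natCast_re, Complex.sub_im,
    Complex.one_im, Complex.natCast_im]
  linear_combination n * ha + b * key - binner Y (skewOfProj E) * hb

end

/-- for every `n ≥ 3` there exist an inner product `α` on `su(n)`, a nonzero
`V ∈ su(n)` satisfying the Randers condition `|⟨Y,V⟩_bi| < √(α(Y,Y))` for `Y ≠ 0`, a nonzero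
`X ∈ su(n)` and `l > 0` such that `√(α(Y,Y)) + ⟨Y,V⟩_bi = l` on the adjoint orbit of `X`. -/
theorem stmt_11 (n : ℕ) (hn : 3 ≤ n) :
    ∃ (α : (su n) →ₗ[ℝ] (su n) →ₗ[ℝ] ℝ) (V X : su n) (l : ℝ),
      (∀ x y : su n, α x y = α y x) ∧
      (∀ x : su n, x ≠ 0 → 0 < α x x) ∧
      V ≠ 0 ∧
      (∀ Y : su n, Y ≠ 0 →
        |binner (Y : Matrix (Fin n) (Fin n) ℂ) (V : Matrix (Fin n) (Fin n) ℂ)| <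
          Real.sqrt (α Y Y)) ∧
      X ≠ 0 ∧ 0 < l ∧
      ∀ Y : su n, (∃ u : specialUnitaryGroup (Fin n) ℂ, Y = Ad u X) →
        Real.sqrt (α Y Y) +
          binner (Y : Matrix (Fin n) (Fin n) ℂ) (V : Matrix (Fin n) (Fin n) ℂ) = l := by
  have hN : (3 : ℝ) ≤ n := by exact_mod_cast hn
  set E : Matrix (Fin n) (Fin n) ℂ := single ⟨0, by omega⟩ ⟨0, by omega⟩ 1
  have hEh : Eᴴ = E := by simp [E, conjTranspose_single]
  have hEE : E * E = E := by simp [E, single_mul_single_same]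
  have hEtr : E.trace = 1 := trace_single_eq_same _ _
  have hP := posSemidef_one_sub hEh hEE
  -- `a`, `b`, `ε` solve the two relations of `randersForm_self_eq_sq` with `l = 1`.
  set a : ℝ := 1 / (2 * n * (n - 1))
  set b : ℝ := 1 / (2 * (n - 1) ^ 2)
  set ε : ℝ := (n - 2) / (4 * n * (n - 1) ^ 2)
  have hn1 : (0 : ℝ) < n - 1 := by linarith
  have hn2 : (0 : ℝ) < n - 2 := by linarith
  have ha : 0 < a := div_pos one_pos (by positivity)
  have hb : 0 < b := div_pos one_pos (by positivity)
  have hε : 0 < ε := div_pos hn2 (by positivity)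
  let X : su n := ⟨skewOfProj E, skewOfProj_mem_su hEh hEtr⟩
  let V : su n := ε • X
  let α := (randersForm a b (1 - E) V).compl₁₂ (su n).incl.toLinearMap (su n).incl.toLinearMap
  have hlow (Y : su n) : a * binner Y.1 Y.1 + binner Y.1 V.1 ^ 2 ≤ α Y Y :=
    le_randersForm_self hb.le hP Y
  have hlt (Y : su n) (hY : Y ≠ 0) : binner Y.1 V.1 ^ 2 < α Y Y :=
    (lt_add_of_pos_left _ (mul_pos ha (binner_self_pos (by simpa using hY)))).trans_le (hlow Y)
  have hX : X ≠ 0 := fun h => skewOfProj_ne_zero hEE hEtr (by omega) (congrArg Subtype.val h)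
  refine ⟨α, V, X, 1, fun Y Z => randersForm_comm (isHermitian_one.sub hEh) Y Z,
    fun Y hY => (sq_nonneg _).trans_lt (hlt Y hY), smul_ne_zero hε.ne' hX,
    fun Y hY => (Real.lt_sqrt (abs_nonneg _)).2 (by rw [sq_abs]; exact hlt Y hY), hX, one_pos, ?_⟩
  rintro Y ⟨u, rfl⟩
  refine sqrt_add_eq_of_eq_sq_sub one_pos ?_ (le_add_of_nonneg_left ?_ |>.trans (hlow _))
  · exact randersForm_self_eq_sq (Ad u X).2 hEtr (Ad_mul_self (skewOfProj_mul_self hEE))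
      (by simp only [b, ε]; field_simp; ring) (by simp only [a, b]; field_simp; ring)
  · exact mul_nonneg ha.le (binner_self_nonneg _)
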